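/- arXiv:2506.16259 — 2 statements merged into one kernel-verified Lean document; each statement's English description precedes it below -/
import Mathlib

section
/- There is a universal constant $C > 0$ with the following property. Let $d_1, d_2, \dots, d_n$ be positive integers of which at least $k \ge 2$ are distinct, say $d_{\ell_1}, \dots, d_{\ell_k}$ are distinct, and let $T_n = \sum_{i=1}^n d_i \varepsilon_i$ where $\varepsilon_1,\dots,\varepsilon_n$ are i.i.d. Rademacher random variables. Then for every integer $m \ge \max_{1 \le i \le k} d_{\ell_i}$, $\mathbb{P}(T_n \equiv 0 \pmod m) \le \frac{C \log k}{k}$. -/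
open MeasureTheory ProbabilityTheory Filter

/-- A `ℤ`-valued random variable is Rademacher if it takes the values `1` and `-1`
each with probability `1/2`. -/
def IsRademacher {Ω : Type*} [MeasurableSpace Ω] (μ : Measure Ω) (ε : Ω → ℤ) : Prop :=
  μ {ω | ε ω = 1} = 1/2 ∧ μ {ω | ε ω = -1} = 1/2

/-- The set of solutions of `y + y = 0` in `ZMod m` has at most two elements. -/
lemma two_torsion_card_le (m : ℕ) [NeZero m] :
    (Finset.univ.filter fun y : ZMod m => y + y = 0).card ≤ 2 := by
  classical
  have hmem : ∀ y ∈ (Finset.univ.filter fun y : ZMod m => y + y = 0),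
      ZMod.val y ∈ ({0, m/2} : Finset ℕ) := by
    intro y hy
    have hy0 : y + y = 0 := (Finset.mem_filter.mp hy).2
    have hval : ((y.val : ZMod m) : ZMod m) = y := by
      simp [ZMod.natCast_val, ZMod.cast_id]
    have hcast : ((y.val + y.val : ℕ) : ZMod m) = 0 := by
      push_cast
      rw [hval, hy0]
    have hdvd : m ∣ y.val + y.val := (ZMod.natCast_eq_zero_iff _ _).mp hcast
    have hlt : y.val < m := ZMod.val_lt y
    obtain ⟨q, hq⟩ := hdvd
    have hm : 0 < m := Nat.pos_of_ne_zero (NeZero.ne m)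
    have hq2 : q < 2 := by
      by_contra hcon
      push_neg at hcon
      have : m * 2 ≤ m * q := Nat.mul_le_mul_left m hcon
      omega
    simp only [Finset.mem_insert, Finset.mem_singleton]
    rcases (by omega : q = 0 ∨ q = 1) with h | h <;> subst h <;>
      simp only [Nat.mul_zero, Nat.mul_one] at hq <;> omega
  calc (Finset.univ.filter fun y : ZMod m => y + y = 0).card
      ≤ ({0, m/2} : Finset ℕ).card :=
        Finset.card_le_card_of_injOn ZMod.val hmem ((ZMod.val_injective m).injOn)
    _ ≤ 2 := Finset.card_insert_le _ _ |>.trans (by simp)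

/-- The set of solutions of `x + x = w` in `ZMod m` has at most two elements. -/
lemma two_sol_card_le (m : ℕ) [NeZero m] (w : ZMod m) :
    (Finset.univ.filter fun x : ZMod m => x + x = w).card ≤ 2 := by
  classical
  rcases (Finset.univ.filter fun x : ZMod m => x + x = w).eq_empty_or_nonempty with h | h
  · simp [h]
  · obtain ⟨x₀, hx₀⟩ := h
    have hx₀' : x₀ + x₀ = w := (Finset.mem_filter.mp hx₀).2
    have hle : (Finset.univ.filter fun x : ZMod m => x + x = w).card
        ≤ (Finset.univ.filter fun y : ZMod m => y + y = 0).card := by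
      apply Finset.card_le_card_of_injOn (fun x => x - x₀)
      · intro x hx
        have hx' : x + x = w := (Finset.mem_filter.mp hx).2
        simp only [Finset.mem_coe, Finset.mem_filter, Finset.mem_univ, true_and]
        have : (x - x₀) + (x - x₀) = (x + x) - (x₀ + x₀) := by ring
        rw [this, hx', hx₀', sub_self]
      · intro a _ b _ hab
        exact sub_left_inj.mp hab
    exact hle.trans (two_torsion_card_le m)

/-- Summing `F (a + (c t + c t))` over an injective family `c` counts every value of `F`
at most twice. -/
lemma sum_shift_le {k m : ℕ} [NeZero m] (F : ZMod m → ENNReal) (c : Fin k → ZMod m)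
    (hc : Function.Injective c) (a : ZMod m) :
    ∑ t : Fin k, F (a + (c t + c t)) ≤ 2 * ∑ v : ZMod m, F v := by
  classical
  have hfib : ∀ v : ZMod m,
      (Finset.univ.filter fun t : Fin k => a + (c t + c t) = v).card ≤ 2 := by
    intro v
    have : (Finset.univ.filter fun t : Fin k => a + (c t + c t) = v).card
        ≤ (Finset.univ.filter fun x : ZMod m => x + x = v - a).card := by
      apply Finset.card_le_card_of_injOn c
      · intro t ht
        have ht' : a + (c t + c t) = v := (Finset.mem_filter.mp ht).2
        simp only [Finset.mem_coe, Finset.mem_filter, Finset.mem_univ, true_and]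
        have := ht'
        rw [← this]; ring
      · exact hc.injOn
    exact this.trans (two_sol_card_le m (v - a))
  calc ∑ t : Fin k, F (a + (c t + c t))
      = ∑ v : ZMod m, ∑ t ∈ Finset.univ.filter (fun t : Fin k => a + (c t + c t) = v), F v :=
        (Finset.sum_fiberwise' Finset.univ (fun t => a + (c t + c t)) F).symm
    _ ≤ ∑ v : ZMod m, 2 * F v := by
        apply Finset.sum_le_sum
        intro v _
        rw [Finset.sum_const, nsmul_eq_mul]
        exact mul_le_mul_left (by exact_mod_cast Nat.cast_le.mpr (hfib v)) (F v)
    _ = 2 * ∑ v : ZMod m, F v := (Finset.mul_sum _ _ _).symm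

/-- **Corollary 3.** There is a universal constant `C > 0` such that whenever
`d₁, …, d_n` are positive integers of which at least `k ≥ 2` are distinct, say those with
indices `ℓ₁, …, ℓ_k`, and `T_n = ∑ d_i ε_i` with `ε_i` i.i.d. Rademacher, then for every
integer `m ≥ max_{1 ≤ i ≤ k} d_{ℓ_i}` we have `ℙ(T_n ≡ 0 (mod m)) ≤ C log k / k`. -/
theorem modular_anticoncentration_subset :
    ∃ C : ℝ, 0 < C ∧
      ∀ (n k : ℕ), 2 ≤ k →
      ∀ (d : Fin n → ℕ), (∀ i, 0 < d i) →
      ∀ (ℓ : Fin k → Fin n), Function.Injective ℓ →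
        Function.Injective (fun i => d (ℓ i)) →
      ∀ {Ω : Type} [MeasurableSpace Ω] (μ : Measure Ω), IsProbabilityMeasure μ →
      ∀ (ε : Fin n → Ω → ℤ), (∀ i, Measurable (ε i)) →
        iIndepFun ε μ →
        (∀ i, IsRademacher μ (ε i)) →
      ∀ (m : ℕ), (∀ i, d (ℓ i) ≤ m) →
        μ {ω | (m : ℤ) ∣ ∑ i, (d i : ℤ) * ε i ω}
          ≤ ENNReal.ofReal (C * Real.log k / k) := by
  classical
  refine ⟨6, by norm_num, ?_⟩
  intro n k hk d hd ℓ hℓ hdℓ Ω mΩ μ hμ ε hmeas hindep hrad m hm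
  -- `m` is positive
  have hm1 : 1 ≤ m := le_trans (hd (ℓ ⟨0, by omega⟩)) (hm ⟨0, by omega⟩)
  haveI : NeZero m := ⟨by omega⟩
  -- every subset of `ℤ` is measurable
  have hZ : ∀ s : Set ℤ, MeasurableSet s := fun s => trivial
  -- the weighted summands
  set g : Fin n → Ω → ℤ := fun j ω => (d j : ℤ) * ε j ω with hg
  have hgmeas : ∀ j, Measurable (g j) := fun j => (hmeas j).const_mul _
  have hgindep : iIndepFun g μ := by
    have := hindep.comp (fun j (x : ℤ) => (d j : ℤ) * x)
      (fun j => measurable_id.const_mul _)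
    exact this
  set T : Ω → ℤ := fun ω => ∑ j, g j ω with hT
  have hTmeas : Measurable T := Finset.measurable_sum _ (fun j _ => hgmeas j)
  set φ : Ω → ZMod m := fun ω => ((T ω : ℤ) : ZMod m) with hφ
  have hφmeas : ∀ a : ZMod m, MeasurableSet (φ ⁻¹' {a}) := by
    intro a
    have : φ ⁻¹' {a} = T ⁻¹' ((Int.cast : ℤ → ZMod m) ⁻¹' {a}) := rfl
    rw [this]
    exact hTmeas (hZ _)
  set F : ZMod m → ENNReal := fun a => μ (φ ⁻¹' {a}) with hF
  -- total mass
  have hsum1 : ∑ v : ZMod m, F v = 1 := by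
    have := sum_measure_preimage_singleton (μ := μ) (Finset.univ : Finset (ZMod m))
      (f := φ) (fun y _ => hφmeas y)
    rw [hF]
    simpa using this
  -- the distinct residues
  set c : Fin k → ZMod m := fun t => ((d (ℓ t) : ℕ) : ZMod m) with hc
  have hcinj : Function.Injective c := by
    intro t s hts
    apply hdℓ
    simp only
    have hmod : d (ℓ t) % m = d (ℓ s) % m := (ZMod.natCast_eq_natCast_iff' _ _ _).mp hts
    have h1t : 1 ≤ d (ℓ t) := hd _
    have h1s : 1 ≤ d (ℓ s) := hd _
    have hmt : d (ℓ t) ≤ m := hm t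
    have hms : d (ℓ s) ≤ m := hm s
    rcases eq_or_lt_of_le hmt with ht | ht <;> rcases eq_or_lt_of_le hms with hs | hs
    · rw [ht, hs]
    · rw [ht, Nat.mod_self, Nat.mod_eq_of_lt hs] at hmod; omega
    · rw [hs, Nat.mod_self, Nat.mod_eq_of_lt ht] at hmod; omega
    · rwa [Nat.mod_eq_of_lt ht, Nat.mod_eq_of_lt hs] at hmod
  -- the key switching inequality
  have step : ∀ (t : Fin k) (a : ZMod m),
      F a ≤ F (a - (c t + c t)) + F (a + (c t + c t)) := by
    intro t a
    set i := ℓ t with hi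
    set R : Ω → ℤ := ∑ j ∈ Finset.univ.erase i, g j with hR
    have hRapp : ∀ ω, R ω = ∑ j ∈ Finset.univ.erase i, g j ω := by
      intro ω; rw [hR]; simp [Finset.sum_apply]
    have hTsplit : ∀ ω, T ω = g i ω + R ω := by
      intro ω
      rw [hRapp, hT]
      exact (Finset.add_sum_erase _ _ (Finset.mem_univ i)).symm
    have hind : IndepFun R (g i) μ :=
      iIndepFun.indepFun_finsetSum_of_notMem hgindep hgmeas (Finset.notMem_erase i Finset.univ)
    set ψ : Ω → ZMod m := fun ω => ((R ω : ℤ) : ZMod m) with hψ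
    -- independence at the level of events
    have hmul : ∀ (w : ℤ) (b : ZMod m),
        μ (g i ⁻¹' {w} ∩ ψ ⁻¹' {b}) = μ (g i ⁻¹' {w}) * μ (ψ ⁻¹' {b}) := by
      intro w b
      have hψpre : ψ ⁻¹' {b} = R ⁻¹' ((Int.cast : ℤ → ZMod m) ⁻¹' {b}) := rfl
      rw [hψpre, Set.inter_comm]
      rw [hind.measure_inter_preimage_eq_mul _ _ (hZ _) (hZ _)]
      ring
    -- the Rademacher events as events of `g i`
    have hε : ∀ σ : ℤ, (g i ⁻¹' {(d i : ℤ) * σ}) = {ω | ε i ω = σ} := by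
      intro σ
      ext ω
      simp only [Set.mem_preimage, Set.mem_singleton_iff, Set.mem_setOf_eq, hg]
      constructor
      · intro h
        have hdne : (d i : ℤ) ≠ 0 := by
          exact_mod_cast (hd i).ne'
        exact mul_left_cancel₀ hdne h
      · intro h; rw [h]
    have hhalf : ∀ σ : ℤ, σ = 1 ∨ σ = -1 → μ (g i ⁻¹' {(d i : ℤ) * σ}) = 1/2 := by
      intro σ hσ
      rw [hε]
      rcases hσ with h | h <;> rw [h]
      · exact (hrad i).1
      · exact (hrad i).2
    -- key computation
    have hkey : ∀ (σ : ℤ) (v : ZMod m),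
        μ (g i ⁻¹' {(d i : ℤ) * σ} ∩ φ ⁻¹' {v})
          = μ (g i ⁻¹' {(d i : ℤ) * σ}) * μ (ψ ⁻¹' {v - (((d i : ℤ) * σ : ℤ) : ZMod m)}) := by
      intro σ v
      have hset : g i ⁻¹' {(d i : ℤ) * σ} ∩ φ ⁻¹' {v}
          = g i ⁻¹' {(d i : ℤ) * σ} ∩ ψ ⁻¹' {v - (((d i : ℤ) * σ : ℤ) : ZMod m)} := by
        ext ω
        simp only [Set.mem_inter_iff, Set.mem_preimage, Set.mem_singleton_iff]
        constructor
        · rintro ⟨h1, h2⟩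
          refine ⟨h1, ?_⟩
          rw [hφ] at h2
          simp only at h2
          rw [hTsplit ω, h1] at h2
          push_cast at h2 ⊢
          rw [← h2]; ring
        · rintro ⟨h1, h2⟩
          refine ⟨h1, ?_⟩
          rw [hφ]
          simp only
          rw [hTsplit ω, h1]
          rw [hψ] at h2
          simp only at h2
          push_cast at h2 ⊢
          rw [h2]; ring
      rw [hset, hmul]
    -- casts of `d i` : the constant `c t`
    have hcast1 : (((d i : ℤ) * 1 : ℤ) : ZMod m) = c t := by
      rw [hc, hi]; push_cast; ring
    have hcastm1 : (((d i : ℤ) * (-1) : ℤ) : ZMod m) = - c t := by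
      rw [hc, hi]; push_cast; ring
    -- the two switched identities
    have hswitch1 : μ (g i ⁻¹' {(d i : ℤ) * 1} ∩ φ ⁻¹' {a})
        = μ (g i ⁻¹' {(d i : ℤ) * (-1)} ∩ φ ⁻¹' {a - (c t + c t)}) := by
      rw [hkey 1 a, hkey (-1) (a - (c t + c t)), hhalf 1 (Or.inl rfl),
        hhalf (-1) (Or.inr rfl), hcast1, hcastm1]
      congr 2
      ring
    have hswitch2 : μ (g i ⁻¹' {(d i : ℤ) * (-1)} ∩ φ ⁻¹' {a})
        = μ (g i ⁻¹' {(d i : ℤ) * 1} ∩ φ ⁻¹' {a + (c t + c t)}) := by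
      rw [hkey (-1) a, hkey 1 (a + (c t + c t)), hhalf 1 (Or.inl rfl),
        hhalf (-1) (Or.inr rfl), hcast1, hcastm1]
      congr 2
      ring
    -- covering the event
    set Aplus := g i ⁻¹' {(d i : ℤ) * 1} with hAplus
    set Aminus := g i ⁻¹' {(d i : ℤ) * (-1)} with hAminus
    have hAplusmeas : MeasurableSet Aplus := hgmeas i (hZ _)
    have hAminusmeas : MeasurableSet Aminus := hgmeas i (hZ _)
    have hdisj : Disjoint Aplus Aminus := by
      rw [hAplus, hAminus]
      apply Set.disjoint_left.mpr
      intro ω h1 h2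
      simp only [Set.mem_preimage, Set.mem_singleton_iff] at h1 h2
      rw [h1] at h2
      have hdne : (d i : ℤ) ≠ 0 := by exact_mod_cast (hd i).ne'
      have := mul_left_cancel₀ hdne h2
      norm_num at this
    have hunion1 : μ (Aplus ∪ Aminus) = 1 := by
      rw [measure_union hdisj hAminusmeas, hhalf 1 (Or.inl rfl), hhalf (-1) (Or.inr rfl)]
      exact ENNReal.add_halves 1
    have hcompl0 : μ ((Aplus ∪ Aminus)ᶜ) = 0 := by
      rw [prob_compl_eq_one_sub (hAplusmeas.union hAminusmeas), hunion1, tsub_self]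
    have hcover : φ ⁻¹' {a} ⊆ (Aplus ∩ φ ⁻¹' {a}) ∪ (Aminus ∩ φ ⁻¹' {a}) ∪ (Aplus ∪ Aminus)ᶜ := by
      intro ω hω
      by_cases h1 : ω ∈ Aplus
      · exact Or.inl (Or.inl ⟨h1, hω⟩)
      · by_cases h2 : ω ∈ Aminus
        · exact Or.inl (Or.inr ⟨h2, hω⟩)
        · exact Or.inr (by simp [h1, h2])
    calc F a = μ (φ ⁻¹' {a}) := rfl
      _ ≤ μ ((Aplus ∩ φ ⁻¹' {a}) ∪ (Aminus ∩ φ ⁻¹' {a}) ∪ (Aplus ∪ Aminus)ᶜ) := measure_mono hcover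
      _ ≤ μ ((Aplus ∩ φ ⁻¹' {a}) ∪ (Aminus ∩ φ ⁻¹' {a})) + μ ((Aplus ∪ Aminus)ᶜ) := measure_union_le _ _
      _ = μ ((Aplus ∩ φ ⁻¹' {a}) ∪ (Aminus ∩ φ ⁻¹' {a})) := by rw [hcompl0, add_zero]
      _ ≤ μ (Aplus ∩ φ ⁻¹' {a}) + μ (Aminus ∩ φ ⁻¹' {a}) := measure_union_le _ _
      _ = μ (Aminus ∩ φ ⁻¹' {a - (c t + c t)}) + μ (Aplus ∩ φ ⁻¹' {a + (c t + c t)}) := by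
          rw [hAplus, hAminus, hswitch1, hswitch2]
      _ ≤ μ (φ ⁻¹' {a - (c t + c t)}) + μ (φ ⁻¹' {a + (c t + c t)}) :=
          add_le_add (measure_mono Set.inter_subset_right)
            (measure_mono Set.inter_subset_right)
      _ = F (a - (c t + c t)) + F (a + (c t + c t)) := rfl
  -- sum the switching inequality over `t`
  have hksum : (k : ENNReal) * F 0 ≤ 4 := by
    have hneg : Function.Injective (fun t => - c t) := fun a b hab => by
      apply hcinj; simpa using hab
    calc (k : ENNReal) * F 0 = ∑ _t : Fin k, F 0 := by
          rw [Finset.sum_const, nsmul_eq_mul]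
          simp
      _ ≤ ∑ t : Fin k, (F (0 - (c t + c t)) + F (0 + (c t + c t))) :=
          Finset.sum_le_sum (fun t _ => step t 0)
      _ = ∑ t : Fin k, F (0 + ((- c t) + (- c t))) + ∑ t : Fin k, F (0 + (c t + c t)) := by
          rw [← Finset.sum_add_distrib]
          apply Finset.sum_congr rfl
          intro t _
          congr 2
          ring
      _ ≤ 2 * ∑ v : ZMod m, F v + 2 * ∑ v : ZMod m, F v :=
          add_le_add (sum_shift_le F _ hneg 0) (sum_shift_le F _ hcinj 0)
      _ = 4 := by rw [hsum1]; norm_num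
  -- hence `F 0 ≤ 4 / k`
  have hknz : (k : ENNReal) ≠ 0 := by
    simp only [ne_eq, Nat.cast_eq_zero]
    omega
  have hkfin : (k : ENNReal) ≠ ⊤ := ENNReal.natCast_ne_top k
  have hF0 : F 0 ≤ 4 / (k : ENNReal) := by
    rw [ENNReal.le_div_iff_mul_le (Or.inl hknz) (Or.inl hkfin)]
    rw [mul_comm]
    exact hksum
  -- identify the target event with `F 0`
  have hevent : {ω | (m : ℤ) ∣ ∑ i, (d i : ℤ) * ε i ω} = φ ⁻¹' {0} := by
    ext ω
    simp only [Set.mem_setOf_eq, Set.mem_preimage, Set.mem_singleton_iff, hφ, hT, hg]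
    exact (ZMod.intCast_zmod_eq_zero_iff_dvd _ m).symm
  rw [hevent]
  refine hF0.trans ?_
  -- final numeric comparison : 4 / k ≤ 6 log k / k
  have hkpos : (0 : ℝ) < (k : ℝ) := by positivity
  have h4k : (4 : ENNReal) / (k : ENNReal) = ENNReal.ofReal (4 / (k : ℝ)) := by
    rw [ENNReal.ofReal_div_of_pos hkpos, ENNReal.ofReal_natCast]
    norm_num
  rw [h4k]
  apply ENNReal.ofReal_le_ofReal
  have hlog2 : Real.log 2 ≤ Real.log k := by
    apply Real.log_le_log (by norm_num)
    exact_mod_cast hk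
  have h4 : (4 : ℝ) ≤ 6 * Real.log k := by
    nlinarith [Real.log_two_gt_d9]
  exact div_le_div_of_nonneg_right h4 hkpos.le
end

section
/- Let $D > 0$, let $m \ge 1$, and let $d_1, \dots, d_m$ be reals with $d_i \ge D$ for all $i$. Let $T_m = d_1\varepsilon_1 + \dots + d_m\varepsilon_m$ where $\varepsilon_1, \dots, \varepsilon_m$ are i.i.d. Rademacher random variables. Then for every $x \in \mathbb{R}$, $\mathbb{P}\big(T_m \in (x - D, x + D]\big) \le \frac{0.8}{\sqrt{m}}$. -/
open MeasureTheory ProbabilityTheory Filter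
open scoped ENNReal


lemma central_sq_bound : ∀ n : ℕ, 6 ≤ n →
    (Nat.centralBinom n)^2 * (50*n+13) ≤ 16^(n+1) := by
  intro n hn
  induction n with
  | zero => omega
  | succ k ih =>
    rcases Nat.lt_or_ge k 6 with hk | hk
    · interval_cases k
      · omega
      all_goals simp only [Nat.centralBinom]; decide
    · have IH := ih hk
      have hrec := Nat.succ_mul_centralBinom_succ k
      have key : (Nat.centralBinom (k+1))^2 * (50*(k+1)+13) * ((k+1)^2 * (50*k+13))
          ≤ 16^(k+2) * ((k+1)^2 * (50*k+13)) := by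
        have h1 : (Nat.centralBinom (k+1))^2 * (k+1)^2 = (2*(2*k+1))^2 * (Nat.centralBinom k)^2 := by
          rw [← mul_pow, ← mul_pow, mul_comm, hrec]
        have h2 : (Nat.centralBinom (k+1))^2 * (50*(k+1)+13) * ((k+1)^2 * (50*k+13))
            = ((Nat.centralBinom k)^2 * (50*k+13)) * ((2*(2*k+1))^2 * (50*k+63)) := by
          have h3 : (Nat.centralBinom (k+1))^2 * (50*(k+1)+13) * ((k+1)^2 * (50*k+13))
              = ((Nat.centralBinom (k+1))^2 * (k+1)^2) * ((50*k+63) * (50*k+13)) := by ring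
          rw [h3, h1]; ring
        rw [h2]
        have hpoly : (2*(2*k+1))^2 * (50*k+63) ≤ 16 * ((k+1)^2 * (50*k+13)) := by nlinarith
        calc ((Nat.centralBinom k)^2 * (50*k+13)) * ((2*(2*k+1))^2 * (50*k+63))
            ≤ 16^(k+1) * (16 * ((k+1)^2 * (50*k+13))) := Nat.mul_le_mul IH hpoly
          _ = 16^(k+2) * ((k+1)^2 * (50*k+13)) := by ring
      exact Nat.le_of_mul_le_mul_right key (by positivity)

lemma choose_half_bound : ∀ m : ℕ, 1 ≤ m →
    25 * (m.choose (m/2))^2 * m ≤ 16 * 4^m := by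
  intro m hm
  rcases Nat.even_or_odd m with ⟨n, hn⟩ | ⟨n, hn⟩
  · subst hn
    have hdiv : (n+n)/2 = n := by omega
    rw [hdiv]
    have hc : (n+n).choose n = Nat.centralBinom n := by
      rw [Nat.centralBinom]; congr 1; ring
    rw [hc]
    have h4 : (4:ℕ)^(n+n) = 16^n := by rw [show n+n = 2*n by ring, pow_mul]; norm_num
    rw [h4]
    rcases Nat.lt_or_ge n 6 with hk | hk
    · interval_cases n
      · omega
      all_goals simp only [Nat.centralBinom]; decide
    · calc 25 * (Nat.centralBinom n)^2 * (n+n)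
          = (Nat.centralBinom n)^2 * (50*n) := by ring
        _ ≤ (Nat.centralBinom n)^2 * (50*n+13) := by gcongr <;> omega
        _ ≤ 16^(n+1) := central_sq_bound n hk
        _ = 16 * 16^n := by ring
  · subst hn
    have hdiv : (2*n+1)/2 = n := by omega
    rw [hdiv]
    have hsymm : (2*n+1).choose (n+1) = (2*n+1).choose n := by
      rw [← Nat.choose_symm (by omega : n+1 ≤ 2*n+1)]
      congr 1; omega
    have hc : Nat.centralBinom (n+1) = 2 * (2*n+1).choose n := by
      rw [Nat.centralBinom, show 2*(n+1) = (2*n+1)+1 by ring,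
        show ((2*n+1)+1).choose (n+1) = (2*n+1).choose n + (2*n+1).choose (n+1) from
          Nat.choose_succ_succ _ _, hsymm]
      ring
    have key : (Nat.centralBinom (n+1))^2 * (50*n+25) ≤ 16^(n+2) := by
      rcases Nat.lt_or_ge n 5 with hk | hk
      · interval_cases n
        all_goals simp only [Nat.centralBinom]; decide
      · calc (Nat.centralBinom (n+1))^2 * (50*n+25)
            ≤ (Nat.centralBinom (n+1))^2 * (50*(n+1)+13) :=
              Nat.mul_le_mul_left _ (by omega)
          _ ≤ 16^(n+2) := central_sq_bound (n+1) (by omega)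
    rw [hc] at key
    have h4 : (4:ℕ)^(2*n+1) = 4 * 16^n := by
      rw [pow_succ, pow_mul]; norm_num; ring
    rw [h4]
    have key2 : 4 * (25 * ((2*n+1).choose n)^2 * (2*n+1)) ≤ 4 * (16 * (4 * 16^n)) := by
      calc 4 * (25 * ((2*n+1).choose n)^2 * (2*n+1))
          = (2 * (2*n+1).choose n)^2 * (50*n+25) := by ring
        _ ≤ 16^(n+2) := key
        _ = 4 * (16 * (4 * 16^n)) := by ring
    exact Nat.le_of_mul_le_mul_left key2 (by norm_num)

lemma choose_half_real (m : ℕ) (hm : 1 ≤ m) :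
    (m.choose (m/2) : ℝ) / 2^m ≤ 0.8 / Real.sqrt m := by
  have hm0 : (0:ℝ) < m := by exact_mod_cast hm
  have hs : 0 < Real.sqrt m := Real.sqrt_pos.2 hm0
  have h2 : (0:ℝ) < 2^m := by positivity
  rw [div_le_div_iff₀ h2 hs]
  have hnat : (25:ℝ) * (m.choose (m/2))^2 * m ≤ 16 * 4^m := by
    exact_mod_cast choose_half_bound m hm
  have h4 : ((4:ℝ))^m = (2^m)^2 := by
    rw [← pow_mul, mul_comm, pow_mul]; norm_num
  rw [h4] at hnat
  have hsq : ((m.choose (m/2) : ℝ) * Real.sqrt m)^2 ≤ (0.8 * 2^m)^2 := by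
    rw [mul_pow, Real.sq_sqrt hm0.le, mul_pow]
    nlinarith [hnat]
  have h1 : (0:ℝ) ≤ (m.choose (m/2) : ℝ) * Real.sqrt m := by positivity
  have h2' : (0:ℝ) ≤ 0.8 * 2^m := by positivity
  exact (pow_le_pow_iff_left₀ h1 h2' (by norm_num)).mp hsq

/-- **Erdős–Littlewood–Offord inequality.** If `d₁, …, d_m ≥ D > 0` and
`T_m = d₁ε₁ + ⋯ + d_mε_m` with `ε_i` i.i.d. Rademacher, then for every `x ∈ ℝ`,
`ℙ(T_m ∈ (x - D, x + D]) ≤ 0.8 / √m`. -/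
theorem erdos_littlewood_offord
    {Ω : Type*} [MeasurableSpace Ω] (μ : Measure Ω) [IsProbabilityMeasure μ]
    (D : ℝ) (hD : 0 < D)
    (m : ℕ) (hm : 1 ≤ m)
    (d : Fin m → ℝ) (hd : ∀ i, D ≤ d i)
    (ε : Fin m → Ω → ℤ)
    (hmeas : ∀ i, Measurable (ε i))
    (hindep : iIndepFun ε μ)
    (hdist : ∀ i, IsRademacher μ (ε i)) :
    ∀ x : ℝ,
      μ {ω | ∑ i, d i * (ε i ω : ℝ) ∈ Set.Ioc (x - D) (x + D)}
        ≤ ENNReal.ofReal (0.8 / Real.sqrt m) := by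
  intro x
  classical
  set c : Bool → ℤ := fun b => if b then 1 else -1 with hc
  set E : (Fin m → Bool) → Set Ω := fun s => ⋂ i ∈ Finset.univ, ε i ⁻¹' {c (s i)} with hE
  -- measure of each atom
  have hEmeas : ∀ s, μ (E s) = (1/2 : ℝ≥0∞)^m := by
    intro s
    have := hindep.measure_inter_preimage_eq_mul (S := Finset.univ)
      (sets := fun i => {c (s i)}) (fun i _ => measurableSet_singleton _)
    rw [hE]
    rw [this]
    have h12 : ∀ i, μ (ε i ⁻¹' {c (s i)}) = 1/2 := by
      intro i
      rcases hdist i with ⟨h1, h2⟩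
      cases hsi : s i <;> simp only [hc, hsi, if_true, if_false]
      · show μ (ε i ⁻¹' {-1}) = 1/2
        convert h2 using 2; rfl
      · show μ (ε i ⁻¹' {1}) = 1/2
        convert h1 using 2; rfl
    simp only [h12]
    simp [Finset.prod_const, Finset.card_univ]
  -- the a.s. good set
  set G : Set Ω := {ω | ∀ i, ε i ω = 1 ∨ ε i ω = -1} with hG
  have hGc : μ Gᶜ = 0 := by
    have hsub : Gᶜ ⊆ ⋃ i, ({ω | ε i ω = 1} ∪ {ω | ε i ω = -1})ᶜ := by
      intro ω hω
      simp only [hG, Set.mem_compl_iff, Set.mem_setOf_eq, not_forall] at hω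
      obtain ⟨i, hi⟩ := hω
      push_neg at hi
      exact Set.mem_iUnion.2 ⟨i, by simp [Set.mem_compl_iff, hi.1, hi.2]⟩
    refine measure_mono_null hsub (measure_iUnion_null fun i => ?_)
    rcases hdist i with ⟨h1, h2⟩
    have hmeas1 : MeasurableSet {ω | ε i ω = 1} := (hmeas i) (measurableSet_singleton 1)
    have hmeas2 : MeasurableSet {ω | ε i ω = -1} := (hmeas i) (measurableSet_singleton (-1))
    have hdisj : Disjoint {ω | ε i ω = 1} {ω | ε i ω = -1} := by
      rw [Set.disjoint_left]; intro ω hω1 hω2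
      simp only [Set.mem_setOf_eq] at hω1 hω2; omega
    have hu : μ ({ω | ε i ω = 1} ∪ {ω | ε i ω = -1}) = 1 := by
      rw [measure_union hdisj hmeas2, h1, h2]
      exact ENNReal.add_halves 1
    rw [measure_compl (hmeas1.union hmeas2) (by simp), hu, measure_univ]
    simp
  -- the Finset of good sign patterns
  set S : Finset (Fin m → Bool) :=
    Finset.univ.filter (fun s => ∑ i, d i * (c (s i) : ℝ) ∈ Set.Ioc (x - D) (x + D)) with hS
  -- covering
  have hcover : {ω | ∑ i, d i * (ε i ω : ℝ) ∈ Set.Ioc (x - D) (x + D)}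
      ⊆ (⋃ s ∈ S, E s) ∪ Gᶜ := by
    intro ω hω
    by_cases hωG : ω ∈ G
    · left
      set s : Fin m → Bool := fun i => decide (ε i ω = 1) with hs
      have hcs : ∀ i, c (s i) = ε i ω := by
        intro i
        rcases hωG i with h | h <;> simp [hs, hc, h]
      have hmemS : s ∈ S := by
        rw [hS, Finset.mem_filter]
        refine ⟨Finset.mem_univ _, ?_⟩
        have h' : ∀ i, d i * ((c (s i) : ℤ) : ℝ) = d i * (ε i ω : ℝ) := by
          intro i; rw [hcs i]
        simpa [h'] using hω
      refine Set.mem_biUnion hmemS ?_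
      simp only [hE, Set.mem_iInter, Set.mem_preimage, Set.mem_singleton_iff]
      intro i _
      exact (hcs i).symm
    · right; exact hωG
  -- antichain bound on S.card
  have hcard : S.card ≤ m.choose (m/2) := by
    set F : (Fin m → Bool) → Finset (Fin m) := fun s => Finset.univ.filter (fun i => s i) with hF
    have hFinj : Set.InjOn F S := by
      intro s₁ _ s₂ _ h
      funext i
      have := Finset.ext_iff.1 h i
      simp only [hF, Finset.mem_filter, Finset.mem_univ, true_and] at this
      by_cases h1 : s₁ i <;> by_cases h2 : s₂ i <;> simp_all
    have hT : ∀ s : Fin m → Bool, ∑ i, d i * (c (s i) : ℝ)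
        = ∑ i, d i * (if i ∈ F s then 1 else -1) := by
      intro s
      refine Finset.sum_congr rfl fun i _ => ?_
      by_cases h : s i <;> simp [hF, hc, h]
    have hanti : IsAntichain (· ⊆ ·) ((S.image F : Finset (Finset (Fin m))) : Set (Finset (Fin m))) := by
      intro A hA B hB hne hsub
      simp only [Finset.coe_image, Set.mem_image, Finset.mem_coe] at hA hB
      obtain ⟨s₁, hs₁, rfl⟩ := hA
      obtain ⟨s₂, hs₂, rfl⟩ := hB
      rw [hS, Finset.mem_filter] at hs₁ hs₂
      have h1 := hs₁.2
      have h2 := hs₂.2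
      rw [hT s₁] at h1
      rw [hT s₂] at h2
      set A := F s₁
      set B := F s₂
      -- A ⊆ B, A ≠ B; get element of B \ A
      have hssub : A ⊂ B := ⟨hsub, fun hBA => hne (le_antisymm hsub hBA)⟩
      obtain ⟨j, hjB, hjA⟩ := Finset.exists_of_ssubset hssub
      have hdiff : ∑ i, d i * (if i ∈ B then (1:ℝ) else -1) - ∑ i, d i * (if i ∈ A then 1 else -1)
          = ∑ i, (if i ∈ B ∧ i ∉ A then 2 * d i else 0) := by
        rw [← Finset.sum_sub_distrib]
        refine Finset.sum_congr rfl fun i _ => ?_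
        by_cases hiA : i ∈ A
        · have hiB : i ∈ B := hsub hiA
          simp [hiA, hiB]
        · by_cases hiB : i ∈ B <;> simp [hiA, hiB] <;> ring
      have hge : (2*D) ≤ ∑ i, (if i ∈ B ∧ i ∉ A then 2 * d i else 0) := by
        have hterm : 2 * D ≤ (if j ∈ B ∧ j ∉ A then 2 * d j else 0) := by
          simp only [hjB, hjA, and_true, if_true, not_false_iff]
          linarith [hd j]
        refine le_trans hterm (Finset.single_le_sum (f := fun i => if i ∈ B ∧ i ∉ A then 2 * d i else 0) (fun i _ => ?_) (Finset.mem_univ j))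
        by_cases h : i ∈ B ∧ i ∉ A <;> simp [h]
        linarith [hd i]
      rw [← hdiff] at hge
      obtain ⟨h1a, h1b⟩ := h1
      obtain ⟨h2a, h2b⟩ := h2
      linarith
    have := IsAntichain.sperner hanti
    rw [Finset.card_image_of_injOn hFinj] at this
    simpa using this
  -- put everything together
  calc μ {ω | ∑ i, d i * (ε i ω : ℝ) ∈ Set.Ioc (x - D) (x + D)}
      ≤ μ ((⋃ s ∈ S, E s) ∪ Gᶜ) := measure_mono hcover
    _ ≤ μ (⋃ s ∈ S, E s) + μ Gᶜ := measure_union_le _ _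
    _ = μ (⋃ s ∈ S, E s) := by rw [hGc, add_zero]
    _ ≤ ∑ s ∈ S, μ (E s) := measure_biUnion_finset_le _ _
    _ = S.card * (1/2 : ℝ≥0∞)^m := by
        rw [Finset.sum_congr rfl (fun s _ => hEmeas s), Finset.sum_const, nsmul_eq_mul]
    _ ≤ (m.choose (m/2) : ℝ≥0∞) * (1/2 : ℝ≥0∞)^m := by
        have : (S.card : ℝ≥0∞) ≤ (m.choose (m/2) : ℝ≥0∞) := by exact_mod_cast hcard
        exact mul_le_mul_left this _
    _ ≤ ENNReal.ofReal (0.8 / Real.sqrt m) := by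
        have heq : (m.choose (m/2) : ℝ≥0∞) * (1/2 : ℝ≥0∞)^m
            = ENNReal.ofReal ((m.choose (m/2) : ℝ) / 2^m) := by
          rw [ENNReal.ofReal_div_of_pos (by positivity), ENNReal.ofReal_natCast,
            ENNReal.ofReal_pow (by norm_num)]
          simp [ENNReal.ofReal_ofNat, div_eq_mul_inv, ← ENNReal.inv_pow, one_div]
        rw [heq]
        exact ENNReal.ofReal_le_ofReal (choose_half_real m hm)
end
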